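/- arXiv:1804.05568 — 2 statements merged into one kernel-verified Lean document; each statement's English description precedes it below -/
import Mathlib

section
/- For k \in \mathbb{N}_0, the depth-one desingularized value satisfies \zeta_1^{des}(-k) = (-1)^k B_{k+1}, where \zeta_1^{des}(-k) := k! times the coefficient of (-t)^k in F(t) := ((1-t)e^t-1)/(e^t-1)^2 and B_m are the Bernoulli numbers. -/
/-!
Differentiating `B(t) (eᵗ - 1) = t`, where `B = ∑ Bₘ tᵐ/m!`, and multiplying by `eᵗ - 1` shows that
`B'` satisfies the same equation `(eᵗ - 1)² F = (1 - t) eᵗ - 1` as `F`. Since `ℚ⟦t⟧` is a domain,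
`F = B'`, whose `k`-th coefficient is `B_{k+1}/k!`.
-/

open PowerSeries

/-- The depth-one value attached to a one-variable power series `f`:
`k!` times the coefficient of `(-t)^k` in `f`. -/
noncomputable def zetaOne (f : PowerSeries ℚ) (k : ℕ) : ℚ :=
  (-1 : ℚ) ^ k * (k.factorial : ℚ) * PowerSeries.coeff k f

namespace PowerSeries

variable (A : Type*)

theorem exp_sub_one_ne_zero [Ring A] [Algebra ℚ A] [Nontrivial A] : exp A - 1 ≠ 0 := by
  intro h
  simpa [coeff_exp] using congrArg (coeff 1) h

variable [CommRing A] [Algebra ℚ A]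

theorem coeff_derivative_bernoulliPowerSeries (n : ℕ) :
    coeff n (d⁄dX A (bernoulliPowerSeries A)) =
      algebraMap ℚ A (bernoulli (n + 1) / n.factorial) := by
  rw [coeff_derivative, bernoulliPowerSeries, coeff_mk, Nat.factorial_succ,
    show ((n : A) + 1) = algebraMap ℚ A (n + 1) by simp, ← map_mul]
  congr 1
  push_cast
  field_simp

theorem exp_sub_one_sq_mul_derivative_bernoulliPowerSeries :
    (exp A - 1) ^ 2 * d⁄dX A (bernoulliPowerSeries A) = (1 - X) * exp A - 1 := by
  have h := bernoulliPowerSeries_mul_exp_sub_one A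
  have hd := congrArg (d⁄dX A) h
  simp only [Derivation.leibniz, map_sub, derivative_exp, derivative_one, derivative_X,
    smul_eq_mul, sub_zero] at hd
  linear_combination (exp A - 1) * hd - exp A * h

end PowerSeries

theorem zetaOne_derivative_bernoulliPowerSeries (k : ℕ) :
    zetaOne (d⁄dX ℚ (bernoulliPowerSeries ℚ)) k = (-1 : ℚ) ^ k * bernoulli (k + 1) := by
  rw [zetaOne, coeff_derivative_bernoulliPowerSeries, Algebra.algebraMap_self, RingHom.id_apply]
  field_simp

/-- For `k ∈ ℕ₀`, the depth-one desingularized value satisfies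
`ζ_1^{des}(-k) = (-1)^k B_{k+1}`, where `ζ_1^{des}(-k) = k![(-t)^k] F(t)` with
`F(t) = ((1-t)e^t-1)/(e^t-1)^2` and `B_m` the Bernoulli numbers. -/
theorem zetaDes_one_eq_bernoulli (F : PowerSeries ℚ)
    (hF : (PowerSeries.exp ℚ - 1) ^ 2 * F =
      (1 - PowerSeries.X) * PowerSeries.exp ℚ - 1) (k : ℕ) :
    zetaOne F k = (-1 : ℚ) ^ k * bernoulli (k + 1) := by
  have hF_eq : F = d⁄dX ℚ (bernoulliPowerSeries ℚ) :=
    mul_left_cancel₀ (pow_ne_zero 2 (exp_sub_one_ne_zero ℚ))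
      (hF.trans (exp_sub_one_sq_mul_derivative_bernoulliPowerSeries ℚ).symm)
  rw [hF_eq, zetaOne_derivative_bernoulliPowerSeries]
end

section
/- For a, b, c \in \mathbb{N}_0, \zeta_1^{des}(-a) \cdot \zeta_2^{des}(-b,-c) = \sum_{i_1+j_1=b} \sum_{i_2+j_2=c} (-1)^{i_1+i_2} \binom{b}{i_1} \binom{c}{i_2} \, \zeta_3^{des}(-a-i_1-i_2, -j_1, -j_2). -/
/-!
Peeling off the first factor gives
`Zgen (r + 1) f = f(t₁ + ⋯ + t_{r+1}) · (Zgen r f)(t₂, …, t_{r+1})`, and reading off coefficients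
turns this into the binomial recursion
`ζ₃(k₁, k₂, k₃) = ∑_{y+w₁=k₂} ∑_{z+w₂=k₃} C(k₂,y) C(k₃,z) ζ₁(k₁+y+z) ζ₂(w₁,w₂)`.
Substituting it into the right-hand side and regrouping by `u = i₁ + y`, `v = i₂ + z`, the sums
over `i₁` and `i₂` become `∑_i (-1)^i C(u,i) = [u = 0]`, so only `ζ₁(a) ζ₂(b,c)` survives.
-/

/-- The multivariate power series `f(∑_{j ∈ S} t_j)` obtained by substituting the
sum of the variables indexed by `S` into the one-variable power series `f`. -/
noncomputable def substSum {r : ℕ} (f : PowerSeries ℚ) (S : Finset (Fin r)) :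
    MvPowerSeries (Fin r) ℚ :=
  fun d => if d.support ⊆ S then
    (d.multinomial : ℚ) * PowerSeries.coeff (d.sum fun _ n => n) f else 0

/-- `Zgen r f = ∏_{i=1}^r f(t_i + ⋯ + t_r)` as a formal power series in `t_1, …, t_r`. -/
noncomputable def Zgen (r : ℕ) (f : PowerSeries ℚ) : MvPowerSeries (Fin r) ℚ :=
  ∏ i : Fin r, substSum f (Finset.Ici i)

/-- View a power series in the variables `t_2, …, t_{r+1}` (i.e. in `r` variables)
as a power series in `t_1, …, t_{r+1}` not involving the first variable. -/
noncomputable def shiftVar {r : ℕ} (f : MvPowerSeries (Fin r) ℚ) :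
    MvPowerSeries (Fin (r + 1)) ℚ :=
  fun d => if d 0 = 0 then
    f (Finsupp.comapDomain Fin.succ d (Fin.succ_injective r).injOn) else 0

/-- The desingularized value `ζ_r^{des}(-k_1, …, -k_r)`: namely `k_1! ⋯ k_r!` times
the coefficient of `(-t_1)^{k_1} ⋯ (-t_r)^{k_r}` in `Zgen r f`. -/
noncomputable def zetaDes (r : ℕ) (f : PowerSeries ℚ) (k : Fin r → ℕ) : ℚ :=
  (∏ i, ((-1 : ℚ) ^ (k i) * (k i).factorial)) *
    MvPowerSeries.coeff (Finsupp.equivFunOnFinite.symm k) (Zgen r f)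

open Finset

theorem Finsupp.sum_antidiagonal_cons {M : Type*} [AddCommMonoid M] {n : ℕ} (a : ℕ)
    (k : Fin n →₀ ℕ) (g : (Fin (n + 1) →₀ ℕ) × (Fin (n + 1) →₀ ℕ) → M) :
    ∑ p ∈ antidiagonal (cons a k), g p =
      ∑ i ∈ antidiagonal a, ∑ q ∈ antidiagonal k, g (cons i.1 q.1, cons i.2 q.2) := by
  rw [← sum_product']
  refine sum_nbij' (fun p => ((p.1 0, p.2 0), (tail p.1, tail p.2)))
    (fun x => (cons x.1.1 x.2.1, cons x.1.2 x.2.2)) ?_ ?_ ?_ ?_ ?_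
  · rintro ⟨p₁, p₂⟩ h
    simp only [HasAntidiagonal.mem_antidiagonal, mem_product] at h ⊢
    refine ⟨by simpa using DFunLike.congr_fun h 0, ?_⟩
    ext i
    simpa [tail_apply] using DFunLike.congr_fun h i.succ
  · rintro ⟨⟨i₁, i₂⟩, ⟨q₁, q₂⟩⟩ h
    simp only [HasAntidiagonal.mem_antidiagonal, mem_product] at h ⊢
    ext j
    refine Fin.cases ?_ (fun j => ?_) j
    · simpa using h.1
    · simpa using DFunLike.congr_fun h.2 j
  · rintro ⟨p₁, p₂⟩ -
    simp [cons_tail]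
  · rintro ⟨⟨i₁, i₂⟩, ⟨q₁, q₂⟩⟩ -
    simp [cons_zero, tail_cons]
  · rintro ⟨p₁, p₂⟩ -
    simp [cons_tail]

theorem coeff_cons_shiftVar {r : ℕ} (g : MvPowerSeries (Fin r) ℚ) (j : ℕ) (q : Fin r →₀ ℕ) :
    MvPowerSeries.coeff (Finsupp.cons j q) (shiftVar g) =
      if j = 0 then MvPowerSeries.coeff q g else 0 := by
  have hq : Finsupp.comapDomain Fin.succ (Finsupp.cons j q) (Fin.succ_injective r).injOn = q := by
    ext i
    simp
  simp [MvPowerSeries.coeff_apply, shiftVar, hq]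

theorem shiftVar_eq_rename {r : ℕ} (g : MvPowerSeries (Fin r) ℚ) :
    shiftVar g = MvPowerSeries.rename (Fin.succEmb r) g := by
  ext d
  rw [← Finsupp.cons_tail d, coeff_cons_shiftVar]
  split_ifs with h
  · have hd : Finsupp.cons (d 0) d.tail = Finsupp.embDomain (Fin.succEmb r) d.tail := by
      ext i
      refine Fin.cases ?_ (fun i => ?_) i
      · rw [Finsupp.cons_zero, h, Finsupp.embDomain_of_notMem_range]
        simp
      · rw [Finsupp.cons_succ, ← Fin.coe_succEmb, Finsupp.embDomain_apply_self]
    rw [hd, MvPowerSeries.coeff_embDomain_rename]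
  · refine (MvPowerSeries.coeff_rename_eq_zero _ _ ?_).symm
    rintro ⟨x, hx⟩
    have := DFunLike.congr_fun hx 0
    rw [Finsupp.mapDomain_of_notMem_range _ _ (by simp), Finsupp.cons_zero] at this
    exact h this.symm

theorem Finsupp.cast_multinomial {α K : Type*} [Fintype α] [Field K] [CharZero K]
    (d : α →₀ ℕ) : (d.multinomial : K) = (∑ i, d i).factorial / ∏ i, ((d i).factorial : K) := by
  have hprod : ∏ i, ((d i).factorial : K) ≠ 0 :=
    Finset.prod_ne_zero_iff.2 fun i _ => Nat.cast_ne_zero.2 (d i).factorial_ne_zero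
  rw [eq_div_iff hprod, mul_comm,
    Finsupp.multinomial_eq_of_support_subset (subset_univ _)]
  exact_mod_cast Nat.multinomial_spec _ _

theorem coeff_substSum {r : ℕ} (f : PowerSeries ℚ) (S : Finset (Fin r)) (d : Fin r →₀ ℕ) :
    MvPowerSeries.coeff d (substSum f S) = if d.support ⊆ S then
      ((∑ i, d i).factorial / ∏ i, ((d i).factorial : ℚ)) * PowerSeries.coeff (∑ i, d i) f
      else 0 := by
  rw [MvPowerSeries.coeff_apply, substSum, Finsupp.cast_multinomial,
    Finsupp.sum_fintype _ _ fun _ => rfl]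

theorem shiftVar_substSum {r : ℕ} (f : PowerSeries ℚ) (S : Finset (Fin r)) :
    shiftVar (substSum f S) = substSum f (S.map (Fin.succEmb r)) := by
  ext d
  obtain ⟨j, q, rfl⟩ : ∃ j q, d = Finsupp.cons j q := ⟨_, _, (Finsupp.cons_tail d).symm⟩
  rw [coeff_cons_shiftVar, coeff_substSum, coeff_substSum]
  by_cases hj : j = 0 <;>
    simp [hj, Finset.subset_iff, Fin.forall_fin_succ, Fin.sum_univ_succ, Fin.prod_univ_succ]

theorem Zgen_succ (r : ℕ) (f : PowerSeries ℚ) :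
    Zgen (r + 1) f = substSum f univ * shiftVar (Zgen r f) := by
  simp only [Zgen, Fin.prod_univ_succ, shiftVar_eq_rename, map_prod, ← Fin.map_succEmb_Ici,
    ← shiftVar_substSum]
  simp

theorem coeff_cons_Zgen_succ (r : ℕ) (f : PowerSeries ℚ) (k₁ : ℕ) (k : Fin r →₀ ℕ) :
    MvPowerSeries.coeff (Finsupp.cons k₁ k) (Zgen (r + 1) f) =
      ∑ q ∈ antidiagonal k, ((k₁ + ∑ i, q.1 i).factorial /
        (k₁.factorial * ∏ i, ((q.1 i).factorial : ℚ))) *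
          PowerSeries.coeff (k₁ + ∑ i, q.1 i) f * MvPowerSeries.coeff q.2 (Zgen r f) := by
  rw [Zgen_succ, MvPowerSeries.coeff_mul, Finsupp.sum_antidiagonal_cons,
    sum_eq_single (k₁, 0)]
  · simp [coeff_cons_shiftVar, coeff_substSum, Fin.sum_univ_succ, Fin.prod_univ_succ]
  · rintro ⟨i₁, i₂⟩ hi hne
    have : i₂ ≠ 0 := by
      rintro rfl
      simp_all
    simp [coeff_cons_shiftVar, this]
  · simp

theorem zetaDes_one (f : PowerSeries ℚ) (n : ℕ) :
    zetaDes 1 f ![n] = (-1) ^ n * n.factorial * PowerSeries.coeff n f := by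
  have h := coeff_cons_Zgen_succ 0 f n 0
  have hZ : Zgen 0 f = 1 := Fin.prod_univ_zero _
  simp only [Finsupp.antidiagonal_zero, sum_singleton, univ_eq_empty, sum_empty, prod_empty,
    add_zero, mul_one, hZ, MvPowerSeries.coeff_zero_one] at h
  have hn : Finsupp.equivFunOnFinite.symm ![n] = Finsupp.cons n 0 :=
    Finsupp.ext fun i => by fin_cases i; rfl
  rw [zetaDes, Fin.prod_univ_one, hn, h, Matrix.cons_val_zero]
  field_simp

theorem zetaDes_succ (r : ℕ) (f : PowerSeries ℚ) (k₁ : ℕ) (k : Fin r →₀ ℕ) :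
    zetaDes (r + 1) f (Fin.cons k₁ k) = ∑ q ∈ antidiagonal k,
      (∏ i, ((k i).choose (q.1 i) : ℚ)) * zetaDes 1 f ![k₁ + ∑ i, q.1 i] * zetaDes r f q.2 := by
  rw [zetaDes, show Finsupp.equivFunOnFinite.symm (Fin.cons k₁ k) = Finsupp.cons k₁ k from rfl,
    coeff_cons_Zgen_succ, mul_sum]
  refine sum_congr rfl fun q hq => ?_
  rw [HasAntidiagonal.mem_antidiagonal] at hq
  rw [zetaDes_one, zetaDes, Finsupp.equivFunOnFinite_symm_coe, Fin.prod_univ_succ]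
  simp only [Fin.cons_zero, Fin.cons_succ, ← hq, Finsupp.coe_add, Pi.add_apply]
  have hfac (i : Fin r) : (((q.1 i + q.2 i).factorial : ℕ) : ℚ) =
      (q.1 i + q.2 i).choose (q.1 i) * (q.1 i).factorial * (q.2 i).factorial := by
    have h := Nat.choose_mul_factorial_mul_factorial (Nat.le_add_right (q.1 i) (q.2 i))
    rw [Nat.add_sub_cancel_left] at h
    exact_mod_cast h.symm
  simp only [hfac, pow_add, prod_mul_distrib, prod_pow_eq_pow_sum]
  field_simp

theorem zetaDes_three (f : PowerSeries ℚ) (k₁ k₂ k₃ : ℕ) :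
    zetaDes 3 f ![k₁, k₂, k₃] = ∑ p₁ ∈ antidiagonal k₂, ∑ p₂ ∈ antidiagonal k₃,
      (k₂.choose p₁.1 : ℚ) * (k₃.choose p₂.1 : ℚ) * zetaDes 1 f ![k₁ + p₁.1 + p₂.1] *
        zetaDes 2 f ![p₁.2, p₂.2] := by
  have hcons (a b : ℕ) : ⇑(Finsupp.cons a (Finsupp.cons b 0) : Fin 2 →₀ ℕ) = ![a, b] := by
    funext i
    fin_cases i <;> rfl
  rw [show ![k₁, k₂, k₃] = Fin.cons k₁ ![k₂, k₃] from rfl, ← hcons, zetaDes_succ,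
    Finsupp.sum_antidiagonal_cons]
  refine sum_congr rfl fun p₁ _ => ?_
  rw [Finsupp.sum_antidiagonal_cons]
  refine sum_congr rfl fun p₂ _ => ?_
  simp [hcons, Fin.sum_univ_two, Fin.prod_univ_two, add_assoc]

section BinomialInversion

variable {R : Type*} [CommRing R]

theorem sum_antidiagonal_neg_one_pow_mul_choose (n : ℕ) :
    ∑ i ∈ antidiagonal n, (-1 : R) ^ i.1 * (n.choose i.1 : R) = if n = 0 then 1 else 0 := by
  have h := congrArg (Int.cast : ℤ → R) (Int.alternating_sum_range_choose (n := n))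
  push_cast at h
  rw [Nat.sum_antidiagonal_eq_sum_range_succ_mk, h]

theorem sum_antidiagonal_alternating_binomial_convolution (g : ℕ → ℕ → R) (n : ℕ) :
    ∑ m ∈ antidiagonal n, (-1 : R) ^ m.1 * (n.choose m.1 : R) *
      ∑ p ∈ antidiagonal m.2, (m.2.choose p.1 : R) * g (m.1 + p.1) p.2 = g 0 n := by
  calc _ = ∑ u ∈ antidiagonal n, (n.choose u.1 : R) * g u.1 u.2 *
          ∑ i ∈ antidiagonal u.1, (-1 : R) ^ i.1 * (u.1.choose i.1 : R) := by
        simp only [mul_sum, sum_sigma']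
        refine sum_nbij' (fun x => ⟨(x.1.1 + x.2.1, x.2.2), (x.1.1, x.2.1)⟩)
          (fun x => ⟨(x.2.1, x.2.2 + x.1.2), (x.2.2, x.1.2)⟩) ?_ ?_ ?_ ?_ ?_ <;>
          rintro ⟨⟨i, j⟩, ⟨y, w⟩⟩ h <;>
          simp only [mem_sigma, HasAntidiagonal.mem_antidiagonal, and_true] at h ⊢ <;>
          obtain ⟨rfl, rfl⟩ := h
        · omega
        · omega
        · rfl
        · rfl
        · have hc : ((i + (y + w)).choose i : R) * (y + w).choose y =
              (i + (y + w)).choose (i + y) * (i + y).choose i := by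
            rw [← Nat.cast_mul, ← Nat.cast_mul, Nat.choose_mul (Nat.le_add_right i y)]
            congr 3 <;> omega
          linear_combination (-1 : R) ^ i * g (i + y) w * hc
    _ = g 0 n := by
        rw [sum_eq_single (0, n)]
        · simp
        · rintro ⟨u, w⟩ huw hne
          have hu : u ≠ 0 := by
            rintro rfl
            simp_all
          simp [sum_antidiagonal_neg_one_pow_mul_choose, hu]
        · simp

theorem sum_antidiagonal_alternating_binomial_convolution₂ (φ : ℕ → R) (h : ℕ → ℕ → R)
    (a b c : ℕ) :
    ∑ m₁ ∈ antidiagonal b, ∑ m₂ ∈ antidiagonal c,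
      (-1 : R) ^ (m₁.1 + m₂.1) * (b.choose m₁.1 : R) * (c.choose m₂.1 : R) *
        ∑ p₁ ∈ antidiagonal m₁.2, ∑ p₂ ∈ antidiagonal m₂.2,
          (m₁.2.choose p₁.1 : R) * (m₂.2.choose p₂.1 : R) *
            φ (a + m₁.1 + m₂.1 + p₁.1 + p₂.1) * h p₁.2 p₂.2 = φ a * h b c := by
  calc _ = ∑ m₁ ∈ antidiagonal b, (-1 : R) ^ m₁.1 * (b.choose m₁.1 : R) *
        ∑ p₁ ∈ antidiagonal m₁.2, (m₁.2.choose p₁.1 : R) *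
          ∑ m₂ ∈ antidiagonal c, (-1 : R) ^ m₂.1 * (c.choose m₂.1 : R) *
            ∑ p₂ ∈ antidiagonal m₂.2, (m₂.2.choose p₂.1 : R) *
              (φ (a + (m₁.1 + p₁.1) + (m₂.1 + p₂.1)) * h p₁.2 p₂.2) := by
        simp only [mul_sum]
        refine sum_congr rfl fun m₁ _ => ?_
        rw [sum_comm]
        refine sum_congr rfl fun p₁ _ => sum_congr rfl fun m₂ _ => sum_congr rfl fun p₂ _ => ?_
        rw [show a + (m₁.1 + p₁.1) + (m₂.1 + p₂.1) = a + m₁.1 + m₂.1 + p₁.1 + p₂.1 by ring]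
        ring
    _ = ∑ m₁ ∈ antidiagonal b, (-1 : R) ^ m₁.1 * (b.choose m₁.1 : R) *
        ∑ p₁ ∈ antidiagonal m₁.2, (m₁.2.choose p₁.1 : R) *
          (φ (a + (m₁.1 + p₁.1)) * h p₁.2 c) := by
        refine sum_congr rfl fun m₁ _ => congrArg _ (sum_congr rfl fun p₁ _ => congrArg _ ?_)
        exact sum_antidiagonal_alternating_binomial_convolution
          (fun u w => φ (a + (m₁.1 + p₁.1) + u) * h p₁.2 w) c
    _ = φ a * h b c :=
        sum_antidiagonal_alternating_binomial_convolution (fun u w => φ (a + u) * h w c) b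

end BinomialInversion

theorem zetaDes_shuffle_one_two_general (F : PowerSeries ℚ) (a b c : ℕ) :
    zetaDes 1 F ![a] * zetaDes 2 F ![b, c] =
      ∑ m₁ ∈ Finset.HasAntidiagonal.antidiagonal b, ∑ m₂ ∈ Finset.HasAntidiagonal.antidiagonal c,
        (-1 : ℚ) ^ (m₁.1 + m₂.1) * (b.choose m₁.1 : ℚ) * (c.choose m₂.1 : ℚ) *
          zetaDes 3 F ![a + m₁.1 + m₂.1, m₁.2, m₂.2] := by
  simp only [zetaDes_three]
  exact (sum_antidiagonal_alternating_binomial_convolution₂ (fun n => zetaDes 1 F ![n])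
    (fun x y => zetaDes 2 F ![x, y]) a b c).symm

/-- Depth `(1,2)` shuffle-type product: for `a, b, c ∈ ℕ₀`,
`ζ_1^{des}(-a) ζ_2^{des}(-b,-c) = ∑_{i_1+j_1=b} ∑_{i_2+j_2=c}
(-1)^{i_1+i_2} C(b,i_1) C(c,i_2) ζ_3^{des}(-a-i_1-i_2, -j_1, -j_2)`. -/
theorem zetaDes_shuffle_one_two (F : PowerSeries ℚ)
    (hF : (PowerSeries.exp ℚ - 1) ^ 2 * F =
      (1 - PowerSeries.X) * PowerSeries.exp ℚ - 1) (a b c : ℕ) :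
    zetaDes 1 F ![a] * zetaDes 2 F ![b, c] =
      ∑ m₁ ∈ Finset.HasAntidiagonal.antidiagonal b, ∑ m₂ ∈ Finset.HasAntidiagonal.antidiagonal c,
        (-1 : ℚ) ^ (m₁.1 + m₂.1) * (b.choose m₁.1 : ℚ) * (c.choose m₂.1 : ℚ) *
          zetaDes 3 F ![a + m₁.1 + m₂.1, m₁.2, m₂.2] :=
  zetaDes_shuffle_one_two_general F a b c
end
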